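/- Let n be a positive integer and let A, B : Matrix (Fin n) (Fin n) ℂ be positive definite Hermitian matrices with A.trace = B.trace. Define log A := hA.cfc Real.log and log B := hB.cfc Real.log via the continuous functional calculus of Hermitian matrices. Then (A * (log A − log B)).trace = 0 if and only if A = B. -/

import Mathlib

/-!
Diagonalize `A = U diag(a) Uᴴ` and `B = V diag(b) Vᴴ` and put `p i j = ‖(Uᴴ V) i j‖ ^ 2`. Both
traces in `Tr A (log A - log B)`, and also `Tr A` and `Tr B`, are `p`-weighted sums over pairs of
eigenvalues, so that
`Tr A (log A - log B) - Tr A + Tr B = ∑ i j, p i j * (a i * (log a i - log b j) + b j - a i)`.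
Each summand is nonnegative, the bracket being `b j * klFun (a i / b j)`, and vanishes only if
`p i j = 0` or `a i = b j`. When all of them vanish, `diag(a)` and `diag(b)` are intertwined by
`Uᴴ V`, which gives `A = B`.
-/

open scoped ComplexOrder
open Matrix Finset InformationTheory

namespace Real

variable {x y : ℝ}

lemma mul_klFun_div (hx : 0 < x) (hy : 0 < y) :
    y * klFun (x / y) = x * (log x - log y) + y - x := by
  rw [klFun, log_div hx.ne' hy.ne']
  field_simp

lemma mul_log_sub_log_add_sub_nonneg (hx : 0 < x) (hy : 0 < y) :
    0 ≤ x * (log x - log y) + y - x := by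
  rw [← mul_klFun_div hx hy]
  exact mul_nonneg hy.le (klFun_nonneg (div_pos hx hy).le)

lemma mul_log_sub_log_add_sub_eq_zero_iff (hx : 0 < x) (hy : 0 < y) :
    x * (log x - log y) + y - x = 0 ↔ x = y := by
  rw [← mul_klFun_div hx hy, mul_eq_zero, klFun_eq_zero_iff (div_pos hx hy).le,
    div_eq_one_iff_eq hy.ne']
  exact or_iff_right hy.ne'

end Real

namespace Matrix

variable {𝕜 ι : Type*} [RCLike 𝕜] [Fintype ι] [DecidableEq ι] {A B : Matrix ι ι 𝕜}

lemma trace_diagonal_mul_mul_diagonal_mul_star (W : Matrix ι ι 𝕜) (d e : ι → ℝ) :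
    trace (diagonal (RCLike.ofReal ∘ d) * W * diagonal (RCLike.ofReal ∘ e) * star W) =
      ((∑ i, ∑ j, d i * e j * ‖W i j‖ ^ 2 : ℝ) : 𝕜) := by
  simp only [trace, diag_apply, Matrix.mul_apply (N := star W), diagonal_mul, mul_diagonal,
    star_apply]
  push_cast
  refine sum_congr rfl fun i _ => sum_congr rfl fun j _ => ?_
  rw [← RCLike.mul_conj]
  simp only [Function.comp_apply, RCLike.star_def]
  ring

namespace IsHermitian

lemma cfc_id (hA : A.IsHermitian) : hA.cfc id = A := by
  rw [← hA.cfc_eq, _root_.cfc_id ℝ A]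

lemma cfc_one (hA : A.IsHermitian) : hA.cfc 1 = 1 := by
  rw [← hA.cfc_eq, _root_.cfc_one ℝ A]

lemma cfc_mul (hA : A.IsHermitian) (f g : ℝ → ℝ) :
    hA.cfc (fun x => f x * g x) = hA.cfc f * hA.cfc g := by
  have hfin := A.finite_real_spectrum
  rw [← hA.cfc_eq, ← hA.cfc_eq, ← hA.cfc_eq,
    _root_.cfc_mul f g A (hfin.continuousOn _) (hfin.continuousOn _)]

noncomputable def eigenvectorOverlap (hA : A.IsHermitian) (hB : B.IsHermitian) : Matrix ι ι 𝕜 :=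
  ((star hA.eigenvectorUnitary * hB.eigenvectorUnitary : unitaryGroup ι 𝕜) : Matrix ι ι 𝕜)

lemma trace_cfc_mul_cfc (hA : A.IsHermitian) (hB : B.IsHermitian) (f g : ℝ → ℝ) :
    trace (hA.cfc f * hB.cfc g) =
      ((∑ i, ∑ j, f (hA.eigenvalues i) * g (hB.eigenvalues j) *
        ‖hA.eigenvectorOverlap hB i j‖ ^ 2 : ℝ) : 𝕜) := by
  rw [← trace_diagonal_mul_mul_diagonal_mul_star]
  simp only [IsHermitian.cfc, Unitary.conjStarAlgAut_apply, eigenvectorOverlap, Submonoid.coe_mul,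
    Unitary.coe_star, star_mul, star_star, mul_assoc]
  rw [trace_mul_comm]
  simp only [mul_assoc]
  rfl

lemma trace_mul_log_sub_log_sub_trace_add_trace (hA : A.IsHermitian) (hB : B.IsHermitian) :
    (A * (hA.cfc Real.log - hB.cfc Real.log)).trace - A.trace + B.trace =
      ((∑ i, ∑ j, ‖hA.eigenvectorOverlap hB i j‖ ^ 2 *
        (hA.eigenvalues i * (Real.log (hA.eigenvalues i) - Real.log (hB.eigenvalues j)) +
          hB.eigenvalues j - hA.eigenvalues i) : ℝ) : 𝕜) := by
  have hAlogA : A * hA.cfc Real.log = hA.cfc (fun x => x * Real.log x) * hB.cfc 1 := by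
    have h := hA.cfc_mul id Real.log
    rw [hA.cfc_id] at h
    rw [hB.cfc_one, mul_one]
    exact h.symm
  have hAlogB : A * hB.cfc Real.log = hA.cfc id * hB.cfc Real.log := by
    rw [hA.cfc_id]
  have htrA : A.trace = trace (hA.cfc id * hB.cfc 1) := by
    rw [hB.cfc_one, mul_one, hA.cfc_id]
  have htrB : B.trace = trace (hA.cfc 1 * hB.cfc id) := by
    rw [hA.cfc_one, one_mul, hB.cfc_id]
  rw [mul_sub, trace_sub, hAlogA, hAlogB, htrA, htrB]
  simp only [trace_cfc_mul_cfc]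
  norm_cast
  simp only [← sum_sub_distrib, ← sum_add_distrib, Pi.one_apply, id]
  refine sum_congr rfl fun i _ => sum_congr rfl fun j _ => ?_
  ring

lemma eq_of_forall_eigenvectorOverlap_eq_zero_or_eigenvalues_eq (hA : A.IsHermitian)
    (hB : B.IsHermitian)
    (h : ∀ i j, hA.eigenvectorOverlap hB i j = 0 ∨ hA.eigenvalues i = hB.eigenvalues j) :
    A = B := by
  set w : unitaryGroup ι 𝕜 := star hA.eigenvectorUnitary * hB.eigenvectorUnitary
  set D : Matrix ι ι 𝕜 := diagonal (RCLike.ofReal ∘ hA.eigenvalues)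
  set E : Matrix ι ι 𝕜 := diagonal (RCLike.ofReal ∘ hB.eigenvalues)
  have hcomm : D * w = w * E := by
    ext i j
    rw [diagonal_mul, mul_diagonal]
    rcases h i j with hij | hij
    · rw [show (w : Matrix ι ι 𝕜) i j = 0 from hij, mul_zero, zero_mul]
    · rw [Function.comp_apply, Function.comp_apply, hij, mul_comm]
  have hconj : Unitary.conjStarAlgAut 𝕜 _ w E = D := by
    rw [Unitary.conjStarAlgAut_apply, ← hcomm, mul_assoc, Unitary.mul_star_self_of_mem w.2,
      mul_one]
  have hw : hA.eigenvectorUnitary * w = hB.eigenvectorUnitary := by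
    rw [← mul_assoc, Unitary.mul_star_self, one_mul]
  calc A = Unitary.conjStarAlgAut 𝕜 _ hA.eigenvectorUnitary D := hA.spectral_theorem
    _ = Unitary.conjStarAlgAut 𝕜 _ (hA.eigenvectorUnitary * w) E := by rw [map_mul, ← hconj]; rfl
    _ = B := by rw [hw, ← hB.spectral_theorem]

end IsHermitian

end Matrix

theorem quantum_relative_entropy_eq_zero_iff_general
    (n : ℕ) (A B : Matrix (Fin n) (Fin n) ℂ)
    (hA : A.PosDef) (hB : B.PosDef) (htr : A.trace = B.trace) :
    (A * (hA.1.cfc Real.log - hB.1.cfc Real.log)).trace = 0 ↔ A = B := by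
  refine ⟨fun h => ?_, by rintro rfl; simp⟩
  have hsum := hA.1.trace_mul_log_sub_log_sub_trace_add_trace hB.1
  rw [h, htr, zero_sub, neg_add_cancel, eq_comm, RCLike.ofReal_eq_zero] at hsum
  have hnonneg : ∀ i j, 0 ≤ ‖hA.1.eigenvectorOverlap hB.1 i j‖ ^ 2 *
      (hA.1.eigenvalues i * (Real.log (hA.1.eigenvalues i) - Real.log (hB.1.eigenvalues j)) +
        hB.1.eigenvalues j - hA.1.eigenvalues i) := fun i j =>
    mul_nonneg (sq_nonneg _)
      (Real.mul_log_sub_log_add_sub_nonneg (hA.eigenvalues_pos i) (hB.eigenvalues_pos j))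
  rw [sum_eq_zero_iff_of_nonneg fun i _ => sum_nonneg fun j _ => hnonneg i j] at hsum
  refine hA.1.eq_of_forall_eigenvectorOverlap_eq_zero_or_eigenvalues_eq hB.1 fun i j => ?_
  have hij := (sum_eq_zero_iff_of_nonneg fun j _ => hnonneg i j).1 (hsum i (mem_univ i)) j
    (mem_univ j)
  rcases mul_eq_zero.1 hij with hW | hab
  · exact Or.inl (by simpa using hW)
  · exact Or.inr ((Real.mul_log_sub_log_add_sub_eq_zero_iff (hA.eigenvalues_pos i)
      (hB.eigenvalues_pos j)).1 hab)

/-- Equality case of Klein's inequality: for positive definite Hermitian matrices `A`, `B` with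
equal trace, the quantum relative entropy `Tr A (log A − log B)` vanishes if and only if
`A = B`, where the matrix logarithm is taken via the continuous functional calculus of
Hermitian matrices. -/
theorem quantum_relative_entropy_eq_zero_iff
    (n : ℕ) (hn : 0 < n) (A B : Matrix (Fin n) (Fin n) ℂ)
    (hA : A.PosDef) (hB : B.PosDef) (htr : A.trace = B.trace) :
    (A * (hA.1.cfc Real.log - hB.1.cfc Real.log)).trace = 0 ↔ A = B :=
  quantum_relative_entropy_eq_zero_iff_general n A B hA hB htr
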